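/- arXiv:0906.0970 — 7 statements merged into one kernel-verified Lean document; each statement's English description precedes it below -/
import Mathlib

section
/- The maximal group of diagonal symmetries G_W of the two-dimensional loop potential W = X1^{a1} X2 + X2^{a2} X1 is a finite group of order a1*a2 − 1. -/
noncomputable section

/-- The maximal group of diagonal symmetries of the two-dimensional loop
potential `W = X1^a1 * X2 + X2^a2 * X1`. -/
def loopSymGroup (a1 a2 : ℕ) : Subgroup (ℂˣ × ℂˣ) where
  carrier := {p | (p.1 : ℂ) ^ a1 * (p.2 : ℂ) = 1 ∧ (p.2 : ℂ) ^ a2 * (p.1 : ℂ) = 1}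
  one_mem' := by simp
  mul_mem' := by
    rintro ⟨x1, x2⟩ ⟨y1, y2⟩ ⟨hx1, hx2⟩ ⟨hy1, hy2⟩
    refine ⟨?_, ?_⟩
    · show ((x1 * y1 : ℂˣ) : ℂ) ^ a1 * ((x2 * y2 : ℂˣ) : ℂ) = 1
      push_cast
      rw [mul_pow]
      calc (x1:ℂ)^a1 * (y1:ℂ)^a1 * ((x2:ℂ) * (y2:ℂ))
          = ((x1:ℂ)^a1 * x2) * ((y1:ℂ)^a1 * y2) := by ring
        _ = 1 := by rw [hx1, hy1, one_mul]
    · show ((x2 * y2 : ℂˣ) : ℂ) ^ a2 * ((x1 * y1 : ℂˣ) : ℂ) = 1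
      push_cast
      rw [mul_pow]
      calc (x2:ℂ)^a2 * (y2:ℂ)^a2 * ((x1:ℂ) * (y1:ℂ))
          = ((x2:ℂ)^a2 * x1) * ((y2:ℂ)^a2 * y1) := by ring
        _ = 1 := by rw [hx2, hy2, one_mul]
  inv_mem' := by
    rintro ⟨x1, x2⟩ ⟨h1, h2⟩
    refine ⟨?_, ?_⟩
    · show ((x1⁻¹ : ℂˣ) : ℂ) ^ a1 * ((x2⁻¹ : ℂˣ) : ℂ) = 1
      rw [Units.val_inv_eq_inv_val, Units.val_inv_eq_inv_val, inv_pow, ← mul_inv, h1, inv_one]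
    · show ((x2⁻¹ : ℂˣ) : ℂ) ^ a2 * ((x1⁻¹ : ℂˣ) : ℂ) = 1
      rw [Units.val_inv_eq_inv_val, Units.val_inv_eq_inv_val, inv_pow, ← mul_inv, h2, inv_one]


/- Eliminating `y = x⁻ᵃ` turns `yᵇ x = 1` into `x^(ab-1) = 1`, so the first projection identifies
`G_W` with the group of `(a1 a2 - 1)`-th roots of unity in `ℂ`, which has exactly `a1 a2 - 1`
elements. -/

theorem mem_loopSymGroup_iff {a1 a2 : ℕ} {p : ℂˣ × ℂˣ} :
    p ∈ loopSymGroup a1 a2 ↔ p.1 ^ a1 * p.2 = 1 ∧ p.2 ^ a2 * p.1 = 1 := by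
  simp only [Units.ext_iff, Units.val_mul, Units.val_pow_eq_pow_val, Units.val_one]
  rfl

theorem pow_mul_eq_one_and_pow_mul_eq_one_iff {G : Type*} [CommGroup G] {a b : ℕ}
    (hab : 1 ≤ a * b) {x y : G} :
    x ^ a * y = 1 ∧ y ^ b * x = 1 ↔ y = (x ^ a)⁻¹ ∧ x ^ (a * b - 1) = 1 := by
  rw [mul_eq_one_iff_eq_inv']
  refine and_congr_right fun hy => ?_
  rw [hy, inv_pow, ← pow_mul, inv_mul_eq_one, ← pow_sub_one_mul (by omega : a * b ≠ 0)]
  exact mul_eq_right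

def loopSymGroupEquivRootsOfUnity (a1 a2 : ℕ) (h : 1 ≤ a1 * a2) :
    loopSymGroup a1 a2 ≃* rootsOfUnity (a1 * a2 - 1) ℂ where
  toFun p := ⟨p.1.1,
    ((pow_mul_eq_one_and_pow_mul_eq_one_iff h).1 (mem_loopSymGroup_iff.1 p.2)).2⟩
  invFun x := ⟨(x, (x.1 ^ a1)⁻¹),
    mem_loopSymGroup_iff.2 <| (pow_mul_eq_one_and_pow_mul_eq_one_iff h).2 ⟨rfl, x.2⟩⟩
  left_inv p := Subtype.ext <| Prod.ext rfl
    ((pow_mul_eq_one_and_pow_mul_eq_one_iff h).1 (mem_loopSymGroup_iff.1 p.2)).1.symm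
  right_inv _ := rfl
  map_mul' _ _ := rfl

/-- The maximal group of diagonal symmetries `G_W` of the two-dimensional loop
potential `W = X1^a1 * X2 + X2^a2 * X1` is a finite group of order `a1*a2 - 1`. -/
theorem loopSymGroup_finite_card (a1 a2 : ℕ) (ha1 : 2 ≤ a1) (ha2 : 2 ≤ a2) :
    Finite (loopSymGroup a1 a2) ∧ Nat.card (loopSymGroup a1 a2) = a1 * a2 - 1 := by
  have h4 : 4 ≤ a1 * a2 := Nat.mul_le_mul ha1 ha2
  have : NeZero (a1 * a2 - 1) := ⟨by omega⟩
  let e := loopSymGroupEquivRootsOfUnity a1 a2 (by omega)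
  exact ⟨Finite.of_equiv _ e.toEquiv.symm, (Nat.card_congr e.toEquiv).trans
    (Complex.card_rootsOfUnity _)⟩

end
end

section
/- Let ζ := exp(2πi/N) with N := a1*a2 − 1. The elements g1 := (ζ^{−1}, ζ^{a1}) and g2 := (ζ^{a2}, ζ^{−1}) both belong to G_W, and each of g1 and g2 generates G_W; in particular G_W is a cyclic group. -/
noncomputable section

/-- With `ζ = exp(2πi/N)`, `N = a1*a2 - 1`, the elements `g1 = (ζ⁻¹, ζ^a1)` and
`g2 = (ζ^a2, ζ⁻¹)` belong to `G_W` and each generates it; in particular `G_W`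
is cyclic. -/
theorem loopSymGroup_generators (a1 a2 : ℕ) (ha1 : 2 ≤ a1) (ha2 : 2 ≤ a2)
    (N : ℕ) (hN : N = a1 * a2 - 1)
    (ζ : ℂˣ) (hζ : (ζ : ℂ) = Complex.exp (2 * Real.pi * Complex.I / N))
    (g1 g2 : ℂˣ × ℂˣ) (hg1 : g1 = (ζ⁻¹, ζ ^ a1)) (hg2 : g2 = (ζ ^ a2, ζ⁻¹)) :
    g1 ∈ loopSymGroup a1 a2 ∧ g2 ∈ loopSymGroup a1 a2 ∧
      Subgroup.zpowers g1 = loopSymGroup a1 a2 ∧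
      Subgroup.zpowers g2 = loopSymGroup a1 a2 ∧
      IsCyclic (loopSymGroup a1 a2) := by

  -- basic numerics
  have hNa : a1 * a2 = N + 1 := by
    rw [hN]
    have : 1 ≤ a1 * a2 := le_trans (by norm_num) (Nat.mul_le_mul ha1 ha2)
    omega
  have hN0 : (N : ℕ) ≠ 0 := by
    have : 4 ≤ a1 * a2 := Nat.mul_le_mul ha1 ha2
    omega
  haveI : NeZero N := ⟨hN0⟩
  have hprim : IsPrimitiveRoot (ζ : ℂ) N := by
    rw [hζ]; exact Complex.isPrimitiveRoot_exp N hN0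
  have hζN : (ζ : ℂ) ^ N = 1 := hprim.pow_eq_one
  have hζNu : ζ ^ N = 1 := Units.ext (by push_cast [hζN]; rfl)
  have hζaa : ζ ^ (a1 * a2) = ζ := by
    rw [hNa, pow_succ, hζNu, one_mul]
  -- membership of g1
  have hmem1 : g1 ∈ loopSymGroup a1 a2 := by
    subst hg1
    constructor
    · show ((ζ⁻¹ : ℂˣ) : ℂ) ^ a1 * ((ζ ^ a1 : ℂˣ) : ℂ) = 1
      push_cast
      rw [inv_pow, inv_mul_cancel₀ (pow_ne_zero _ (Units.ne_zero ζ))]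
    · show (((ζ ^ a1 : ℂˣ) : ℂ)) ^ a2 * ((ζ⁻¹ : ℂˣ) : ℂ) = 1
      push_cast
      rw [← pow_mul, hNa, pow_succ, hζN, one_mul,
        mul_inv_cancel₀ (Units.ne_zero ζ)]
  have hmem2 : g2 ∈ loopSymGroup a1 a2 := by
    subst hg2
    constructor
    · show (((ζ ^ a2 : ℂˣ) : ℂ)) ^ a1 * ((ζ⁻¹ : ℂˣ) : ℂ) = 1
      push_cast
      rw [← pow_mul, mul_comm a2 a1, hNa, pow_succ, hζN, one_mul,
        mul_inv_cancel₀ (Units.ne_zero ζ)]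
    · show ((ζ⁻¹ : ℂˣ) : ℂ) ^ a2 * ((ζ ^ a2 : ℂˣ) : ℂ) = 1
      push_cast
      rw [inv_pow, inv_mul_cancel₀ (pow_ne_zero _ (Units.ne_zero ζ))]
  -- structure of elements of the group
  have key : ∀ p : ℂˣ × ℂˣ, p ∈ loopSymGroup a1 a2 →
      ∃ i : ℕ, p.1 = ζ ^ i ∧ p.2 = (ζ ^ (a1 * i))⁻¹ := by
    intro p hp
    obtain ⟨h1, h2⟩ := hp
    have hp2 : (p.2 : ℂ) = ((p.1 : ℂ) ^ a1)⁻¹ := by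
      field_simp
      linear_combination h1
    have hne : (p.1 : ℂ) ≠ 0 := Units.ne_zero _
    have hp1N : (p.1 : ℂ) ^ N = 1 := by
      rw [hp2, inv_pow, ← pow_mul,
        inv_mul_eq_one₀ (pow_ne_zero _ hne)] at h2
      rw [hNa, pow_succ] at h2
      exact mul_right_cancel₀ hne (by rw [h2, one_mul])
    obtain ⟨i, _, hi⟩ := hprim.eq_pow_of_pow_eq_one hp1N
    refine ⟨i, ?_, ?_⟩
    · exact Units.ext (by push_cast [hi]; rfl)
    · apply Units.ext
      push_cast
      rw [hp2, ← hi, ← pow_mul, mul_comm i a1]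
  -- zpowers g1
  have hzp1 : Subgroup.zpowers g1 = loopSymGroup a1 a2 := by
    apply le_antisymm ((Subgroup.zpowers_le).mpr hmem1)
    intro p hp
    obtain ⟨i, hpi1, hpi2⟩ := key p hp
    refine ⟨-(i : ℤ), ?_⟩
    subst hg1
    show ((ζ⁻¹, ζ ^ a1) : ℂˣ × ℂˣ) ^ (-(i : ℤ)) = p
    apply Prod.ext
    · rw [Prod.pow_fst, hpi1, zpow_neg, inv_zpow, inv_inv, zpow_natCast]
    · rw [Prod.pow_snd, hpi2, zpow_neg, zpow_natCast, ← pow_mul]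
  -- zpowers g2
  have hzp2 : Subgroup.zpowers g2 = loopSymGroup a1 a2 := by
    apply le_antisymm ((Subgroup.zpowers_le).mpr hmem2)
    intro p hp
    obtain ⟨i, hpi1, hpi2⟩ := key p hp
    -- p = (ζ^i, ζ^{-a1 i}); g2 = (ζ^{a2}, ζ⁻¹); g2^{a1 i} = (ζ^{a2 a1 i}, ζ^{-a1 i})
    -- and ζ^{a1 a2 i} = ζ^{(N+1) i} = ζ^i.
    refine ⟨(a1 * i : ℕ), ?_⟩
    subst hg2
    have hz : (ζ ^ a2) ^ (a1 * i) = ζ ^ i := by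
      rw [← pow_mul]
      have : a2 * (a1 * i) = (a1 * a2) * i := by ring
      rw [this, pow_mul, hζaa]
    show ((ζ ^ a2, ζ⁻¹) : ℂˣ × ℂˣ) ^ ((a1 * i : ℕ) : ℤ) = p
    apply Prod.ext
    · rw [Prod.pow_fst, hpi1, zpow_natCast, hz]
    · rw [Prod.pow_snd, hpi2, zpow_natCast, inv_pow]
  refine ⟨hmem1, hmem2, hzp1, hzp2, ?_⟩
  -- cyclicity
  refine ⟨⟨⟨g1, hzp1 ▸ Subgroup.mem_zpowers g1⟩, ?_⟩⟩
  rintro ⟨x, hx⟩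
  rw [← hzp1] at hx
  obtain ⟨k, hk⟩ := hx
  exact ⟨k, Subtype.ext (by push_cast [← hk]; rfl)⟩


end
end

section
/- The images of the monomials X1^{b1} X2^{b2} with 0 ≤ b1 < a1 and 0 ≤ b2 < a2 form a basis of the Milnor ring Q_W = ℂ[X1, X2]/Jac(W) as a vector space over ℂ. -/
/-!
Write `x, y` for the images of `X1, X2` in `Q_W`. Multiplying the two Jacobian relations by `x`
and `y` gives `a1 u + v = 0` and `u + a2 v = 0` for `u = x^a1 y`, `v = x y^a2`, so `u = v = 0` as
`a1 a2 ≠ 1`. Together with `x^a1 = -a2 x y^(a2-1)` and `y^a2 = -a1 x^(a1-1) y` this makes the span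
of the box monomials stable under multiplication by `x` and `y`, hence all of `Q_W`.

For independence, a linear functional `λ` on `ℂ[X1, X2]` vanishing on `Jac(W)` gives the pairing
`λ(pq)` on `Q_W`. There `x^(a1-1-d1) y^(a2-1-d2)` pairs to `1` with `x^d1 y^d2` and to `0` with
every other box monomial, except for a `2 × 2` block on the corners `x^(a1-1)`, `y^(a2-1)` of
determinant `1 - a1 a2 ≠ 0`.
-/

noncomputable section

open MvPolynomial

/-- The two-dimensional loop potential `W = X1^a1 * X2 + X2^a2 * X1`. -/
def loopPotential (a1 a2 : ℕ) : MvPolynomial (Fin 2) ℂ :=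
  X 0 ^ a1 * X 1 + X 1 ^ a2 * X 0

/-- The Jacobian ideal of the loop potential. -/
def loopJac (a1 a2 : ℕ) : Ideal (MvPolynomial (Fin 2) ℂ) :=
  Ideal.span {pderiv 0 (loopPotential a1 a2), pderiv 1 (loopPotential a1 a2)}

/-- The Milnor ring of the loop potential. -/
def loopMilnor (a1 a2 : ℕ) : Type :=
  MvPolynomial (Fin 2) ℂ ⧸ loopJac a1 a2

instance (a1 a2 : ℕ) : CommRing (loopMilnor a1 a2) :=
  Ideal.Quotient.commRing _

instance (a1 a2 : ℕ) : Algebra ℂ (loopMilnor a1 a2) :=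
  Ideal.Quotient.algebra ℂ

theorem Submodule.eq_top_of_one_mem_of_mul_algHom_X_mem {R σ A : Type*} [CommSemiring R]
    [Semiring A] [Algebra R A] {f : MvPolynomial σ R →ₐ[R] A} (hf : Function.Surjective f)
    {M : Submodule R A} (h1 : 1 ∈ M) (hX : ∀ i, ∀ m ∈ M, m * f (X i) ∈ M) : M = ⊤ := by
  refine M.eq_top_iff'.mpr fun a => ?_
  obtain ⟨p, rfl⟩ := hf a
  induction p using MvPolynomial.induction_on with
  | C r => simpa [Algebra.algebraMap_eq_smul_one] using M.smul_mem r h1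
  | add p q hp hq => simpa using M.add_mem hp hq
  | mul_X p i hp => simpa using hX i _ hp

theorem MvPolynomial.monomial_one_eq_X_pow_mul_X_pow {R : Type*} [CommSemiring R]
    (s : Fin 2 →₀ ℕ) : monomial s (1 : R) = X 0 ^ s 0 * X 1 ^ s 1 := by
  rw [monomial_eq, C_1, one_mul, Finsupp.prod_fintype _ _ (by simp), Fin.prod_univ_two]

theorem MvPolynomial.coeff_X_pow_mul_X_pow {R : Type*} [CommSemiring R] (i j k l : ℕ) :
    coeff (Finsupp.single 0 k + Finsupp.single 1 l) (X 0 ^ i * X 1 ^ j : MvPolynomial (Fin 2) R) =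
      if i = k ∧ j = l then 1 else 0 := by
  rw [X_pow_eq_monomial, X_pow_eq_monomial, monomial_mul, one_mul, coeff_monomial]
  exact if_congr (by simp [Finsupp.ext_iff, Fin.forall_fin_two]) rfl rfl

def boxMonomials {A : Type*} [Monoid A] (x y : A) (a1 a2 : ℕ) : Fin a1 × Fin a2 → A :=
  fun b => x ^ (b.1 : ℕ) * y ^ (b.2 : ℕ)

section LoopRelations

variable {R A : Type*} [CommRing R] [CommRing A] [Algebra R A] {a1 a2 : ℕ} {x y : A}

theorem pow_mul_eq_zero_and_mul_pow_eq_zero_of_loop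
    (h1 : (a1 : A) * x ^ (a1 - 1) * y + y ^ a2 = 0)
    (h2 : x ^ a1 + (a2 : A) * x * y ^ (a2 - 1) = 0)
    (ha1 : 1 ≤ a1) (ha2 : 1 ≤ a2) (hu : IsUnit ((a1 * a2 : A) - 1)) :
    x ^ a1 * y = 0 ∧ x * y ^ a2 = 0 := by
  obtain ⟨n1, rfl⟩ := Nat.exists_eq_add_of_le' ha1
  obtain ⟨n2, rfl⟩ := Nat.exists_eq_add_of_le' ha2
  simp only [Nat.add_sub_cancel] at h1 h2
  have hxy : x ^ (n1 + 1) * y = 0 := by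
    refine hu.mul_right_eq_zero.mp ?_
    linear_combination ((n2 + 1 : ℕ) : A) * x * h1 - y * h2
  exact ⟨hxy, by linear_combination x * h1 - ((n1 + 1 : ℕ) : A) * hxy⟩

theorem pow_mul_pow_mem_span_boxMonomials {i j : ℕ} (hi : i < a1) (hj : j < a2) :
    x ^ i * y ^ j ∈ Submodule.span R (Set.range (boxMonomials x y a1 a2)) :=
  Submodule.subset_span ⟨(⟨i, hi⟩, ⟨j, hj⟩), rfl⟩

theorem pow_mul_pow_mul_left_mem_span_boxMonomials
    (h2 : x ^ a1 + (a2 : A) * x * y ^ (a2 - 1) = 0) (hxy : x ^ a1 * y = 0) (ha1 : 2 ≤ a1)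
    {i j : ℕ} (hi : i < a1) (hj : j < a2) :
    x ^ i * y ^ j * x ∈ Submodule.span R (Set.range (boxMonomials x y a1 a2)) := by
  rw [mul_right_comm, ← pow_succ]
  by_cases hi' : i + 1 < a1
  · exact pow_mul_pow_mem_span_boxMonomials hi' hj
  obtain rfl : i + 1 = a1 := by omega
  rcases j with _ | j
  · have hx : x ^ (i + 1) * y ^ 0 = -(a2 • (x ^ 1 * y ^ (a2 - 1))) := by
      rw [nsmul_eq_mul]; linear_combination h2
    rw [hx]
    exact neg_mem (nsmul_mem (pow_mul_pow_mem_span_boxMonomials (by omega) (by omega)) _)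
  · rw [show x ^ (i + 1) * y ^ (j + 1) = 0 by linear_combination y ^ j * hxy]
    exact zero_mem _

theorem pow_mul_pow_mul_right_mem_span_boxMonomials
    (h1 : (a1 : A) * x ^ (a1 - 1) * y + y ^ a2 = 0) (hyx : x * y ^ a2 = 0) (ha2 : 2 ≤ a2)
    {i j : ℕ} (hi : i < a1) (hj : j < a2) :
    x ^ i * y ^ j * y ∈ Submodule.span R (Set.range (boxMonomials x y a1 a2)) := by
  rw [mul_assoc, ← pow_succ]
  by_cases hj' : j + 1 < a2
  · exact pow_mul_pow_mem_span_boxMonomials hi hj'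
  obtain rfl : j + 1 = a2 := by omega
  rcases i with _ | i
  · have hy : x ^ 0 * y ^ (j + 1) = -(a1 • (x ^ (a1 - 1) * y ^ 1)) := by
      rw [nsmul_eq_mul]; linear_combination h1
    rw [hy]
    exact neg_mem (nsmul_mem (pow_mul_pow_mem_span_boxMonomials (by omega) (by omega)) _)
  · rw [show x ^ (i + 1) * y ^ (j + 1) = 0 by linear_combination x ^ i * hyx]
    exact zero_mem _

theorem span_boxMonomials_eq_top_of_loop {f : MvPolynomial (Fin 2) R →ₐ[R] A}
    (hf : Function.Surjective f)
    (h1 : (a1 : A) * f (X 0) ^ (a1 - 1) * f (X 1) + f (X 1) ^ a2 = 0)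
    (h2 : f (X 0) ^ a1 + (a2 : A) * f (X 0) * f (X 1) ^ (a2 - 1) = 0)
    (hxy : f (X 0) ^ a1 * f (X 1) = 0) (hyx : f (X 0) * f (X 1) ^ a2 = 0)
    (ha1 : 2 ≤ a1) (ha2 : 2 ≤ a2) :
    Submodule.span R (Set.range (boxMonomials (f (X 0)) (f (X 1)) a1 a2)) = ⊤ := by
  refine Submodule.eq_top_of_one_mem_of_mul_algHom_X_mem hf ?_ fun k m hm => ?_
  · simpa using pow_mul_pow_mem_span_boxMonomials (R := R) (x := f (X 0)) (y := f (X 1))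
      (i := 0) (j := 0) (by omega) (by omega)
  induction hm using Submodule.span_induction with
  | mem _ hm =>
    obtain ⟨b, rfl⟩ := hm
    fin_cases k
    · exact pow_mul_pow_mul_left_mem_span_boxMonomials h2 hxy ha1 b.1.isLt b.2.isLt
    · exact pow_mul_pow_mul_right_mem_span_boxMonomials h1 hyx ha2 b.1.isLt b.2.isLt
  | zero => simp
  | add m m' _ _ hm hm' => simpa [add_mul] using add_mem hm hm'
  | smul r m _ hm => simpa [smul_mul_assoc] using Submodule.smul_mem _ r hm

end LoopRelations

variable {a1 a2 : ℕ}

theorem natCast_mul_natCast_sub_one_ne_zero {K : Type*} [Ring K] [CharZero K] (ha1 : 2 ≤ a1)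
    (ha2 : 2 ≤ a2) : (a1 * a2 : K) - 1 ≠ 0 :=
  sub_ne_zero.mpr (by exact_mod_cast (by nlinarith : a1 * a2 ≠ 1))

theorem pderiv_zero_loopPotential (a1 a2 : ℕ) :
    pderiv 0 (loopPotential a1 a2) =
      (a1 : MvPolynomial (Fin 2) ℂ) * X 0 ^ (a1 - 1) * X 1 + X 1 ^ a2 := by
  simp [loopPotential]
  ring

theorem pderiv_one_loopPotential (a1 a2 : ℕ) :
    pderiv 1 (loopPotential a1 a2) =
      X 0 ^ a1 + (a2 : MvPolynomial (Fin 2) ℂ) * X 0 * X 1 ^ (a2 - 1) := by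
  simp [loopPotential]
  ring

theorem mkₐ_pderiv_loopPotential (i : Fin 2) :
    Ideal.Quotient.mkₐ ℂ (loopJac a1 a2) (pderiv i (loopPotential a1 a2)) = 0 := by
  rw [Ideal.Quotient.mkₐ_eq_mk, Ideal.Quotient.eq_zero_iff_mem]
  exact Ideal.subset_span (by fin_cases i <;> simp)

/-- Reduced modulo `Jac(W)`, `y^(2a2-2) ≡ -a1 x^(a1-1) y^(a2-1)` and
`x^(2a1-2) ≡ -a2 x^(a1-1) y^(a2-1)`; this is the resulting coefficient of `x^(a1-1) y^(a2-1)`. -/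
def loopResidue (a1 a2 : ℕ) : MvPolynomial (Fin 2) ℂ →ₗ[ℂ] ℂ :=
  lcoeff ℂ (Finsupp.single 0 (a1 - 1) + Finsupp.single 1 (a2 - 1)) -
    (a1 : ℂ) • lcoeff ℂ (Finsupp.single 0 0 + Finsupp.single 1 (2 * a2 - 2)) -
    (a2 : ℂ) • lcoeff ℂ (Finsupp.single 0 (2 * a1 - 2) + Finsupp.single 1 0)

theorem loopResidue_X_pow_mul_X_pow (i j : ℕ) :
    loopResidue a1 a2 (X 0 ^ i * X 1 ^ j) =
      (if i = a1 - 1 ∧ j = a2 - 1 then 1 else 0) -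
        a1 * (if i = 0 ∧ j = 2 * a2 - 2 then 1 else 0) -
        a2 * (if i = 2 * a1 - 2 ∧ j = 0 then 1 else 0) := by
  simp only [loopResidue, LinearMap.sub_apply, LinearMap.smul_apply, lcoeff_apply,
    coeff_X_pow_mul_X_pow, smul_eq_mul]

theorem loopResidue_mul_pderiv_zero (ha1 : 2 ≤ a1) (ha2 : 2 ≤ a2) (p : MvPolynomial (Fin 2) ℂ) :
    loopResidue a1 a2 (p * pderiv 0 (loopPotential a1 a2)) = 0 := by
  suffices loopResidue a1 a2 ∘ₗ LinearMap.mulRight ℂ (pderiv 0 (loopPotential a1 a2)) = 0 from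
    LinearMap.congr_fun this p
  refine linearMap_ext fun s => LinearMap.ext_ring ?_
  rw [LinearMap.comp_apply, LinearMap.comp_apply, LinearMap.mulRight_apply,
    monomial_one_eq_X_pow_mul_X_pow, pderiv_zero_loopPotential,
    show X 0 ^ s 0 * X 1 ^ s 1 * ((a1 : MvPolynomial (Fin 2) ℂ) * X 0 ^ (a1 - 1) * X 1 + X 1 ^ a2) =
      a1 • (X 0 ^ (s 0 + (a1 - 1)) * X 1 ^ (s 1 + 1)) + X 0 ^ s 0 * X 1 ^ (s 1 + a2) by ring,
    map_add, map_nsmul, loopResidue_X_pow_mul_X_pow, loopResidue_X_pow_mul_X_pow,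
    LinearMap.zero_comp, LinearMap.zero_apply]
  split_ifs <;> first | omega | ring1 | simp_all

theorem loopResidue_mul_pderiv_one (ha1 : 2 ≤ a1) (ha2 : 2 ≤ a2) (p : MvPolynomial (Fin 2) ℂ) :
    loopResidue a1 a2 (p * pderiv 1 (loopPotential a1 a2)) = 0 := by
  suffices loopResidue a1 a2 ∘ₗ LinearMap.mulRight ℂ (pderiv 1 (loopPotential a1 a2)) = 0 from
    LinearMap.congr_fun this p
  refine linearMap_ext fun s => LinearMap.ext_ring ?_
  rw [LinearMap.comp_apply, LinearMap.comp_apply, LinearMap.mulRight_apply,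
    monomial_one_eq_X_pow_mul_X_pow, pderiv_one_loopPotential,
    show X 0 ^ s 0 * X 1 ^ s 1 * (X 0 ^ a1 + (a2 : MvPolynomial (Fin 2) ℂ) * X 0 * X 1 ^ (a2 - 1)) =
      X 0 ^ (s 0 + a1) * X 1 ^ s 1 + a2 • (X 0 ^ (s 0 + 1) * X 1 ^ (s 1 + (a2 - 1))) by ring,
    map_add, map_nsmul, loopResidue_X_pow_mul_X_pow, loopResidue_X_pow_mul_X_pow,
    LinearMap.zero_comp, LinearMap.zero_apply]
  split_ifs <;> first | omega | ring1 | simp_all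

theorem loopResidue_eq_zero_of_mem (ha1 : 2 ≤ a1) (ha2 : 2 ≤ a2) {p : MvPolynomial (Fin 2) ℂ}
    (hp : p ∈ loopJac a1 a2) : loopResidue a1 a2 p = 0 := by
  obtain ⟨u, v, rfl⟩ := Ideal.mem_span_pair.mp hp
  rw [map_add, loopResidue_mul_pderiv_zero ha1 ha2, loopResidue_mul_pderiv_one ha1 ha2, add_zero]

theorem loopResidue_rev_mul [NeZero a1] [NeZero a2] (ha1 : 2 ≤ a1) (ha2 : 2 ≤ a2)
    (d b : Fin a1 × Fin a2) :
    loopResidue a1 a2 (X 0 ^ (d.1.rev : ℕ) * X 1 ^ (d.2.rev : ℕ) *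
      (X 0 ^ (b.1 : ℕ) * X 1 ^ (b.2 : ℕ))) =
      (if b = d then 1 else 0) -
        a1 * (if d = (Fin.rev 0, 0) ∧ b = (0, Fin.rev 0) then 1 else 0) -
        a2 * (if d = (0, Fin.rev 0) ∧ b = (Fin.rev 0, 0) then 1 else 0) := by
  rw [mul_mul_mul_comm, ← pow_add, ← pow_add, loopResidue_X_pow_mul_X_pow]
  simp only [Prod.ext_iff, Fin.ext_iff, Fin.val_rev, Fin.val_zero]
  congr 1
  · congr 1
    · exact if_congr (by omega) rfl rfl
    · exact congrArg _ (if_congr (by omega) rfl rfl)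
  · exact congrArg _ (if_congr (by omega) rfl rfl)

theorem loopResidue_rev_mul_sum [NeZero a1] [NeZero a2] (ha1 : 2 ≤ a1) (ha2 : 2 ≤ a2)
    (c : Fin a1 × Fin a2 → ℂ) (d : Fin a1 × Fin a2) :
    loopResidue a1 a2 (X 0 ^ (d.1.rev : ℕ) * X 1 ^ (d.2.rev : ℕ) *
      ∑ b, c b • (X 0 ^ (b.1 : ℕ) * X 1 ^ (b.2 : ℕ))) =
      c d - a1 * (if d = (Fin.rev 0, 0) then c (0, Fin.rev 0) else 0) -
        a2 * (if d = (0, Fin.rev 0) then c (Fin.rev 0, 0) else 0) := by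
  simp only [Finset.mul_sum, mul_smul_comm, map_sum, map_smul, loopResidue_rev_mul ha1 ha2,
    smul_eq_mul, mul_sub, Finset.sum_sub_distrib, ite_and, mul_ite, mul_one, mul_zero,
    Finset.sum_ite_eq', Finset.mem_univ, if_true]
  split_ifs <;> simp [Finset.sum_ite_eq', mul_comm]

theorem linearIndependent_loopJac_boxMonomials (ha1 : 2 ≤ a1) (ha2 : 2 ≤ a2) :
    LinearIndependent ℂ (fun b : Fin a1 × Fin a2 =>
      Ideal.Quotient.mk (loopJac a1 a2) (X 0 ^ (b.1 : ℕ) * X 1 ^ (b.2 : ℕ))) := by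
  have : NeZero a1 := ⟨by omega⟩
  have : NeZero a2 := ⟨by omega⟩
  rw [Fintype.linearIndependent_iff]
  intro c hc
  have hmem : ∑ b, c b • (X 0 ^ (b.1 : ℕ) * X 1 ^ (b.2 : ℕ)) ∈ loopJac a1 a2 := by
    rw [← Ideal.Quotient.eq_zero_iff_mem, ← hc]
    simp only [← Ideal.Quotient.mkₐ_eq_mk ℂ, map_sum, map_smul]
  have hdual (d : Fin a1 × Fin a2) :
      c d - a1 * (if d = (Fin.rev 0, 0) then c (0, Fin.rev 0) else 0) -
        a2 * (if d = (0, Fin.rev 0) then c (Fin.rev 0, 0) else 0) = 0 := by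
    rw [← loopResidue_rev_mul_sum ha1 ha2]
    exact loopResidue_eq_zero_of_mem ha1 ha2 (Ideal.mul_mem_left _ _ hmem)
  have hne : ((Fin.rev 0, 0) : Fin a1 × Fin a2) ≠ (0, Fin.rev 0) := by
    simp only [ne_eq, Prod.ext_iff, Fin.ext_iff, Fin.val_rev, Fin.val_zero]
    omega
  have hA := hdual (Fin.rev 0, 0)
  have hB := hdual (0, Fin.rev 0)
  rw [if_pos rfl, if_neg hne] at hA
  rw [if_neg hne.symm, if_pos rfl] at hB
  have hcA : c (Fin.rev 0, 0) = 0 := by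
    refine (mul_eq_zero.mp ?_).resolve_left (natCast_mul_natCast_sub_one_ne_zero ha1 ha2)
    linear_combination -hA - (a1 : ℂ) * hB
  have hcB : c (0, Fin.rev 0) = 0 := by linear_combination hB + (a2 : ℂ) * hcA
  intro d
  simpa [hcA, hcB] using hdual d

theorem span_loopJac_boxMonomials_eq_top (ha1 : 2 ≤ a1) (ha2 : 2 ≤ a2) :
    Submodule.span ℂ (Set.range fun b : Fin a1 × Fin a2 =>
      Ideal.Quotient.mk (loopJac a1 a2) (X 0 ^ (b.1 : ℕ) * X 1 ^ (b.2 : ℕ))) = ⊤ := by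
  set f := Ideal.Quotient.mkₐ ℂ (loopJac a1 a2)
  have h1 : (a1 : MvPolynomial (Fin 2) ℂ ⧸ loopJac a1 a2) * f (X 0) ^ (a1 - 1) * f (X 1) +
      f (X 1) ^ a2 = 0 := by
    simpa [f, pderiv_zero_loopPotential] using mkₐ_pderiv_loopPotential (a1 := a1) (a2 := a2) 0
  have h2 : f (X 0) ^ a1 +
      (a2 : MvPolynomial (Fin 2) ℂ ⧸ loopJac a1 a2) * f (X 0) * f (X 1) ^ (a2 - 1) = 0 := by
    simpa [f, pderiv_one_loopPotential] using mkₐ_pderiv_loopPotential (a1 := a1) (a2 := a2) 1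
  have hu : IsUnit ((a1 * a2 : MvPolynomial (Fin 2) ℂ ⧸ loopJac a1 a2) - 1) := by
    simpa using ((natCast_mul_natCast_sub_one_ne_zero ha1 ha2).isUnit).map
      (algebraMap ℂ (MvPolynomial (Fin 2) ℂ ⧸ loopJac a1 a2))
  obtain ⟨hxy, hyx⟩ :=
    pow_mul_eq_zero_and_mul_pow_eq_zero_of_loop h1 h2 (by omega) (by omega) hu
  have hfam : (fun b : Fin a1 × Fin a2 =>
      Ideal.Quotient.mk (loopJac a1 a2) (X 0 ^ (b.1 : ℕ) * X 1 ^ (b.2 : ℕ))) =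
      boxMonomials (f (X 0)) (f (X 1)) a1 a2 := by
    ext b
    simp [boxMonomials, f]
  rw [hfam]
  exact span_boxMonomials_eq_top_of_loop (Ideal.Quotient.mkₐ_surjective ℂ _) h1 h2 hxy hyx ha1 ha2

/-- The images of the monomials `X1^b1 * X2^b2` with `0 ≤ b1 < a1`,
`0 ≤ b2 < a2` form a `ℂ`-basis of the Milnor ring `Q_W`. -/
theorem loopMilnor_monomial_basis (a1 a2 : ℕ) (ha1 : 2 ≤ a1) (ha2 : 2 ≤ a2) :
    LinearIndependent ℂ
      (fun b : Fin a1 × Fin a2 =>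
        Ideal.Quotient.mk (loopJac a1 a2) (X 0 ^ (b.1 : ℕ) * X 1 ^ (b.2 : ℕ))) ∧
    Submodule.span ℂ
      (Set.range (fun b : Fin a1 × Fin a2 =>
        Ideal.Quotient.mk (loopJac a1 a2) (X 0 ^ (b.1 : ℕ) * X 1 ^ (b.2 : ℕ)))) = ⊤ :=
  ⟨linearIndependent_loopJac_boxMonomials ha1 ha2, span_loopJac_boxMonomials_eq_top ha1 ha2⟩

end
end

section
/- For integers b1, b2 with 0 ≤ b1 < a1 and 0 ≤ b2 < a2, one has α1^{b1+1} α2^{b2+1} = 1 for all (α1, α2) ∈ G_W if and only if (b1, b2) = (a1 − 1, 0) or (b1, b2) = (0, a2 − 1). -/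
noncomputable section

/-- For `0 ≤ b1 < a1` and `0 ≤ b2 < a2`, the invariance condition
`α1^(b1+1) * α2^(b2+1) = 1` holds for all `(α1, α2) ∈ G_W` iff
`(b1, b2) = (a1 - 1, 0)` or `(b1, b2) = (0, a2 - 1)`. -/
theorem loopSymGroup_invariant_monomials (a1 a2 : ℕ) (ha1 : 2 ≤ a1) (ha2 : 2 ≤ a2)
    (b1 b2 : ℕ) (hb1 : b1 < a1) (hb2 : b2 < a2) :
    (∀ p ∈ loopSymGroup a1 a2, (p.1 : ℂ) ^ (b1 + 1) * (p.2 : ℂ) ^ (b2 + 1) = 1) ↔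
      (b1 = a1 - 1 ∧ b2 = 0) ∨ (b1 = 0 ∧ b2 = a2 - 1) := by
  have hN : a1 * a2 - 1 ≠ 0 := by
    have : 4 ≤ a1 * a2 := Nat.mul_le_mul ha1 ha2
    omega
  set N := a1 * a2 - 1 with hNdef
  have hNeq : a1 * a2 = N + 1 := by
    have : 4 ≤ a1 * a2 := Nat.mul_le_mul ha1 ha2
    omega
  constructor
  · intro h
    set ζ := Complex.exp (2 * Real.pi * Complex.I / N) with hζdef
    have hζ : IsPrimitiveRoot ζ N := Complex.isPrimitiveRoot_exp N hN
    have hζ0 : ζ ≠ 0 := Complex.exp_ne_zero _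
    set u : ℂˣ := Units.mk0 ζ hζ0 with hu
    have huv : (u : ℂ) = ζ := rfl
    have hmem : ((u, (u ^ a1)⁻¹) : ℂˣ × ℂˣ) ∈ loopSymGroup a1 a2 := by
      constructor
      · show (u : ℂ) ^ a1 * (((u ^ a1)⁻¹ : ℂˣ) : ℂ) = 1
        rw [Units.val_inv_eq_inv_val, Units.val_pow_eq_pow_val, huv,
          mul_inv_cancel₀ (pow_ne_zero _ hζ0)]
      · show (((u ^ a1)⁻¹ : ℂˣ) : ℂ) ^ a2 * (u : ℂ) = 1
        rw [Units.val_inv_eq_inv_val, Units.val_pow_eq_pow_val, huv, ← inv_pow, ← pow_mul,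
          inv_pow, inv_mul_eq_one₀ (pow_ne_zero _ hζ0), hNeq, pow_succ, hζ.pow_eq_one, one_mul]
    have hkey := h _ hmem
    simp only at hkey
    have hz : ζ ^ (((b1 : ℤ) + 1) - (a1 : ℤ) * ((b2 : ℤ) + 1)) = 1 := by
      rw [zpow_sub₀ hζ0]
      have e1 : ζ ^ ((b1 : ℤ) + 1) = ζ ^ (b1 + 1) := by
        rw [← zpow_natCast]; norm_cast
      have e2 : ζ ^ ((a1 : ℤ) * ((b2 : ℤ) + 1)) = ζ ^ (a1 * (b2 + 1)) := by
        rw [← zpow_natCast]; norm_cast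
      rw [e1, e2]
      have hv : (((u ^ a1)⁻¹ : ℂˣ) : ℂ) ^ (b2 + 1) = (ζ ^ (a1 * (b2 + 1)))⁻¹ := by
        rw [Units.val_inv_eq_inv_val, Units.val_pow_eq_pow_val, huv, ← inv_pow, ← pow_mul,
          inv_pow]
      rw [huv, hv] at hkey
      exact hkey
    have hdvd : (N : ℤ) ∣ (((b1 : ℤ) + 1) - (a1 : ℤ) * ((b2 : ℤ) + 1)) :=
      (hζ.zpow_eq_one_iff_dvd _).mp hz
    obtain ⟨c, hc⟩ := hdvd
    have ha1' : (2 : ℤ) ≤ a1 := by exact_mod_cast ha1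
    have ha2' : (2 : ℤ) ≤ a2 := by exact_mod_cast ha2
    have hNz : (N : ℤ) = (a1 : ℤ) * a2 - 1 := by
      have h4 : 1 ≤ a1 * a2 := by omega
      push_cast [hNdef, Nat.cast_sub h4]
      ring
    have h4' : (4 : ℤ) ≤ (a1 : ℤ) * a2 := by exact_mod_cast Nat.mul_le_mul ha1 ha2
    have hNpos : (0 : ℤ) < (N : ℤ) := by rw [hNz]; linarith
    have hb1' : (b1 : ℤ) + 1 ≤ a1 := by exact_mod_cast hb1
    have hb2' : (b2 : ℤ) + 1 ≤ a2 := by exact_mod_cast hb2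
    have hb1nn : (0 : ℤ) ≤ b1 := Int.natCast_nonneg _
    have hb2nn : (0 : ℤ) ≤ b2 := Int.natCast_nonneg _
    have hmul1 : (a1 : ℤ) ≤ (a1 : ℤ) * ((b2 : ℤ) + 1) :=
      le_mul_of_one_le_right (by linarith) (by linarith)
    have hmul2 : (a1 : ℤ) * ((b2 : ℤ) + 1) ≤ (a1 : ℤ) * a2 :=
      mul_le_mul_of_nonneg_left hb2' (by linarith)
    have hub : (N : ℤ) * c ≤ 0 := by rw [← hc]; linarith
    have hlb : -(N : ℤ) ≤ (N : ℤ) * c := by rw [← hc, hNz]; linarith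
    have hcub : c ≤ 0 := by
      by_contra hcon
      push_neg at hcon
      have : (N : ℤ) ≤ (N : ℤ) * c := le_mul_of_one_le_right hNpos.le hcon
      linarith
    have hclb : -1 ≤ c := by
      by_contra hcon
      push_neg at hcon
      have : (N : ℤ) * c ≤ (N : ℤ) * (-2) :=
        mul_le_mul_of_nonneg_left (by omega) hNpos.le
      linarith
    have hcases : c = -1 ∨ c = 0 := by omega
    rcases hcases with hc0 | hc0 <;> subst hc0
    · -- c = -1 : b1 = 0, b2 = a2 - 1
      right
      rw [hNz] at hc
      have h1 : (b1 : ℤ) = (a1 : ℤ) * ((b2 : ℤ) + 1 - a2) := by linarith [hc]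
      have hble : (b2 : ℤ) + 1 - a2 ≤ 0 := by linarith
      have hnp : (a1 : ℤ) * ((b2 : ℤ) + 1 - a2) ≤ 0 :=
        mul_nonpos_of_nonneg_of_nonpos (by linarith) hble
      have hb1z : (b1 : ℤ) = 0 := le_antisymm (by linarith) hb1nn
      have hz2 : (a1 : ℤ) * ((b2 : ℤ) + 1 - a2) = 0 := by linarith
      have h2 : (b2 : ℤ) + 1 - a2 = 0 := by
        rcases mul_eq_zero.mp hz2 with hh | hh
        · linarith
        · exact hh
      have hb2e : (b2 : ℤ) = (a2 : ℤ) - 1 := by linarith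
      refine ⟨by exact_mod_cast hb1z, ?_⟩
      omega
    · -- c = 0 : b1 = a1 - 1, b2 = 0
      left
      simp only [mul_zero] at hc
      have h1 : (b1 : ℤ) + 1 = (a1 : ℤ) * ((b2 : ℤ) + 1) := by linarith
      have hle : (a1 : ℤ) * ((b2 : ℤ) + 1) ≤ (a1 : ℤ) * 1 := by linarith
      have hb2le : (b2 : ℤ) + 1 ≤ 1 :=
        le_of_mul_le_mul_left hle (by linarith)
      have hb2z' : b2 = 0 := by omega
      refine ⟨?_, hb2z'⟩
      rw [hb2z'] at h1
      push_cast at h1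
      omega
  · rintro (⟨h1, h2⟩ | ⟨h1, h2⟩) ⟨p1, p2⟩ ⟨hp1, hp2⟩ <;> subst h1 <;> subst h2
    · have e : a1 - 1 + 1 = a1 := by omega
      simpa [e] using hp1
    · have e : a2 - 1 + 1 = a2 := by omega
      rw [pow_one, mul_comm]
      simpa [e] using hp2

end
end

section
/- Let ζ := exp(2πi/N) with N := a1*a2 − 1, let g1 := (ζ^{−1}, ζ^{a1}), g2 := (ζ^{a2}, ζ^{−1}), and J := (ζ^{a2−1}, ζ^{a1−1}) in G_W. Then: (i) J · g1^{a2−1} = (1,1) and J · g2^{a1−1} = (1,1); (ii) every element g ∈ G_W with g ≠ (1,1) can be written in the form g = J · g1^{α} · g2^{β} with 0 ≤ α ≤ a2 − 1 and 0 ≤ β ≤ a1 − 1, and this representation of g is unique. -/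
noncomputable section

private lemma digit_unique' {a α α' x x' : ℕ} (hα : α < a) (hα' : α' < a)
    (h : α + a * x = α' + a * x') : α = α' ∧ x = x' := by
  have h1 : (α + a * x) % a = α := by
    rw [Nat.add_mul_mod_self_left, Nat.mod_eq_of_lt hα]
  have h2 : (α' + a * x') % a = α' := by
    rw [Nat.add_mul_mod_self_left, Nat.mod_eq_of_lt hα']
  have hαα : α = α' := by rw [← h1, ← h2, h]
  have hx : x = x' := by
    rw [hαα] at h
    exact Nat.eq_of_mul_eq_mul_left (by omega) (Nat.add_left_cancel h)
  exact ⟨hαα, hx⟩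

private lemma key_arith' (a1 a2 N k : ℕ) (ha1 : 2 ≤ a1) (ha2 : 2 ≤ a2)
    (hN : N = a1 * a2 - 1) (hk0 : 0 < k) (hkN : k < N) :
    ∃! αβ : ℕ × ℕ, αβ.1 ≤ a2 - 1 ∧ αβ.2 ≤ a1 - 1 ∧
      αβ.1 + a2 * (a1 - 1 - αβ.2) + k = N := by
  have hcomm : a1 * a2 = a2 * a1 := Nat.mul_comm _ _
  obtain ⟨q, r, hqr, hrlt, hqlt⟩ :
      ∃ q r, r + a2 * q = N - k ∧ r < a2 ∧ q < a1 := by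
    refine ⟨(N - k) / a2, (N - k) % a2, Nat.mod_add_div _ _,
      Nat.mod_lt _ (by omega), Nat.div_lt_of_lt_mul (by omega)⟩
  refine ⟨(r, a1 - 1 - q), ⟨by omega, by omega, ?_⟩, ?_⟩
  · simp only
    have h1 : a1 - 1 - (a1 - 1 - q) = q := by omega
    rw [h1]
    omega
  · rintro ⟨α, β⟩ ⟨hα, hβ, heq⟩
    simp only at hα hβ heq ⊢
    have huu : α + a2 * (a1 - 1 - β) = r + a2 * q := by omega
    have hd := digit_unique' (show α < a2 by omega) hrlt huu
    have hb : a1 - 1 - β = q := hd.2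
    exact Prod.ext hd.1 (by omega)

/-- (i) `J g1^(a2-1) = 1 = J g2^(a1-1)`; (ii) every non-identity `g ∈ G_W` has
a unique representation `g = J g1^α g2^β` with `0 ≤ α ≤ a2-1`, `0 ≤ β ≤ a1-1`. -/
theorem loopSymGroup_unique_representation (a1 a2 : ℕ) (ha1 : 2 ≤ a1) (ha2 : 2 ≤ a2)
    (N : ℕ) (hN : N = a1 * a2 - 1)
    (ζ : ℂˣ) (hζ : (ζ : ℂ) = Complex.exp (2 * Real.pi * Complex.I / N))
    (g1 g2 J : ℂˣ × ℂˣ) (hg1 : g1 = (ζ⁻¹, ζ ^ a1)) (hg2 : g2 = (ζ ^ a2, ζ⁻¹))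
    (hJ : J = (ζ ^ (a2 - 1), ζ ^ (a1 - 1))) :
    (J * g1 ^ (a2 - 1) = 1 ∧ J * g2 ^ (a1 - 1) = 1) ∧
    (∀ g ∈ loopSymGroup a1 a2, g ≠ 1 →
      ∃! αβ : ℕ × ℕ, αβ.1 ≤ a2 - 1 ∧ αβ.2 ≤ a1 - 1 ∧
        g = J * g1 ^ αβ.1 * g2 ^ αβ.2) := by
  have hmul4 : 4 ≤ a1 * a2 := Nat.mul_le_mul ha1 ha2
  have hN0 : N ≠ 0 := by omega
  haveI : NeZero N := ⟨hN0⟩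
  have hprimC : IsPrimitiveRoot (ζ : ℂ) N := by
    rw [hζ]; exact Complex.isPrimitiveRoot_exp N hN0
  have hprim : IsPrimitiveRoot ζ N := IsPrimitiveRoot.coe_units_iff.mp hprimC
  have hζN : ζ ^ N = 1 := hprim.pow_eq_one
  have hkey : ∀ s t : ℤ, ζ ^ s = ζ ^ t ↔ (N : ℤ) ∣ s - t := by
    intro s t
    rw [← hprim.zpow_eq_one_iff_dvd, zpow_sub, mul_inv_eq_one]
  have hNZ : (N : ℤ) = (a1 : ℤ) * a2 - 1 := by
    rw [hN, Nat.cast_sub (by omega : 1 ≤ a1 * a2), Nat.cast_mul, Nat.cast_one]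
  have hp1 : a1 * (a2 - 1) + a1 = a1 * a2 := by
    calc a1 * (a2 - 1) + a1 = a1 * ((a2 - 1) + 1) := by rw [Nat.mul_succ]
    _ = a1 * a2 := by congr 1; omega
  have hp2 : a2 * (a1 - 1) + a2 = a2 * a1 := by
    calc a2 * (a1 - 1) + a2 = a2 * ((a1 - 1) + 1) := by rw [Nat.mul_succ]
    _ = a2 * a1 := by congr 1; omega
  have hcomm : a1 * a2 = a2 * a1 := Nat.mul_comm _ _
  constructor
  · constructor
    · rw [hJ, hg1]
      refine Prod.ext ?_ ?_
      · show ζ ^ (a2 - 1) * (ζ⁻¹) ^ (a2 - 1) = 1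
        rw [inv_pow, mul_inv_cancel]
      · show ζ ^ (a1 - 1) * (ζ ^ a1) ^ (a2 - 1) = 1
        rw [← pow_mul, ← pow_add, show a1 - 1 + a1 * (a2 - 1) = N by omega, hζN]
    · rw [hJ, hg2]
      refine Prod.ext ?_ ?_
      · show ζ ^ (a2 - 1) * (ζ ^ a2) ^ (a1 - 1) = 1
        rw [← pow_mul, ← pow_add, show a2 - 1 + a2 * (a1 - 1) = N by omega, hζN]
      · show ζ ^ (a1 - 1) * (ζ⁻¹) ^ (a1 - 1) = 1
        rw [inv_pow, mul_inv_cancel]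
  · rintro ⟨x1, x2⟩ hg hgne
    obtain ⟨h1, h2⟩ := hg
    have h1u : x1 ^ a1 * x2 = 1 := by apply Units.ext; push_cast; exact h1
    have h2u : x2 ^ a2 * x1 = 1 := by apply Units.ext; push_cast; exact h2
    have hx2 : x2 = (x1 ^ a1)⁻¹ := eq_inv_of_mul_eq_one_right h1u
    have hx1N : x1 ^ N = 1 := by
      rw [hx2, inv_pow, ← pow_mul, inv_mul_eq_one] at h2u
      have hx : x1 ^ (N + 1) = x1 := by rw [show N + 1 = a1 * a2 by omega]; exact h2u
      rw [pow_succ] at hx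
      exact mul_right_cancel (hx.trans (one_mul x1).symm)
    have hx1NC : (x1 : ℂ) ^ N = 1 := by
      have := congrArg Units.val hx1N
      push_cast at this
      exact this
    obtain ⟨k, hkN2, hkC⟩ := hprimC.eq_pow_of_pow_eq_one hx1NC
    have hku : ζ ^ k = x1 := by apply Units.ext; push_cast; exact hkC
    have hk0 : 0 < k := by
      rcases Nat.eq_zero_or_pos k with h0 | h
      · exfalso
        apply hgne
        rw [h0, pow_zero] at hku
        have hx1' : x1 = 1 := hku.symm
        have hx2' : x2 = 1 := by rw [hx2, hx1', one_pow, inv_one]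
        rw [hx1', hx2']
        rfl
      · exact h
    -- component computation
    have c2 : ((a2 - 1 : ℕ) : ℤ) = (a2 : ℤ) - 1 := by omega
    have c1 : ((a1 - 1 : ℕ) : ℤ) = (a1 : ℤ) - 1 := by omega
    have hcomp : ∀ α β : ℕ, J * g1 ^ α * g2 ^ β =
        (ζ ^ ((a2 : ℤ) - 1 - α + a2 * β), ζ ^ ((a1 : ℤ) - 1 + a1 * α - β)) := by
      intro α β
      rw [hJ, hg1, hg2]
      refine Prod.ext ?_ ?_
      · show ζ ^ (a2 - 1) * (ζ⁻¹) ^ α * (ζ ^ a2) ^ β = ζ ^ ((a2 : ℤ) - 1 - α + a2 * β)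
        rw [inv_pow, ← pow_mul, ← zpow_natCast ζ (a2 - 1), ← zpow_natCast ζ α,
          ← zpow_natCast ζ (a2 * β), ← zpow_neg, ← zpow_add, ← zpow_add]
        congr 1
        push_cast [c2]
        ring
      · show ζ ^ (a1 - 1) * (ζ ^ a1) ^ α * (ζ⁻¹) ^ β = ζ ^ ((a1 : ℤ) - 1 + a1 * α - β)
        rw [inv_pow, ← pow_mul, ← zpow_natCast ζ (a1 - 1), ← zpow_natCast ζ β,
          ← zpow_natCast ζ (a1 * α), ← zpow_neg, ← zpow_add, ← zpow_add]
        congr 1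
        push_cast [c1]
        ring
    have hgfst : x1 = ζ ^ (k : ℤ) := by rw [← hku, zpow_natCast]
    have hgsnd : x2 = ζ ^ (-((k * a1 : ℕ) : ℤ)) := by
      rw [hx2, ← hku, ← pow_mul, ← zpow_natCast ζ (k * a1), ← zpow_neg]
    have hiff : ∀ α β : ℕ, α ≤ a2 - 1 → β ≤ a1 - 1 →
        ((x1, x2) = J * g1 ^ α * g2 ^ β ↔ α + a2 * (a1 - 1 - β) + k = N) := by
      intro α β hα hβ
      rw [hcomp, Prod.ext_iff]
      simp only
      have hcast : ((α + a2 * (a1 - 1 - β) + k : ℕ) : ℤ)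
          = (α : ℤ) + a2 * ((a1 : ℤ) - 1 - β) + k := by
        have hc : ((a1 - 1 - β : ℕ) : ℤ) = (a1 : ℤ) - 1 - β := by omega
        push_cast [hc]
        ring
      have hub : α + a2 * (a1 - 1 - β) + k ≤ N + k := by
        have hmm : a2 * (a1 - 1 - β) ≤ a2 * (a1 - 1) := Nat.mul_le_mul_left _ (by omega)
        omega
      constructor
      · rintro ⟨e1, -⟩
        rw [hgfst] at e1
        have hd := (hkey _ _).mp e1
        have hid : (k : ℤ) - ((a2 : ℤ) - 1 - α + a2 * β)
            = ((α + a2 * (a1 - 1 - β) + k : ℕ) : ℤ) - N := by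
          rw [hcast, hNZ]; ring
        rw [hid] at hd
        have hz : ((α + a2 * (a1 - 1 - β) + k : ℕ) : ℤ) - N = 0 := by
          refine Int.eq_zero_of_abs_lt_dvd hd ?_
          rw [abs_lt]
          constructor <;> [skip; skip] <;> omega
        omega
      · intro heq
        have he1 : (k : ℤ) = (a2 : ℤ) - 1 - α + a2 * β := by
          have hid : (k : ℤ) - ((a2 : ℤ) - 1 - α + a2 * β)
              = ((α + a2 * (a1 - 1 - β) + k : ℕ) : ℤ) - N := by
            rw [hcast, hNZ]; ring
          omega
        constructor
        · rw [hgfst, he1]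
        · rw [hgsnd]
          rw [hkey]
          refine ⟨-(1 + β), ?_⟩
          push_cast
          rw [he1, hNZ]
          ring
    obtain ⟨⟨α0, β0⟩, ⟨hb1, hb2, heq0⟩, huniq⟩ :=
      key_arith' a1 a2 N k ha1 ha2 hN hk0 hkN2
    refine ⟨(α0, β0), ⟨hb1, hb2, (hiff α0 β0 hb1 hb2).mpr heq0⟩, ?_⟩
    rintro ⟨α, β⟩ ⟨hbα, hbβ, heqg⟩
    exact huniq (α, β) ⟨hbα, hbβ, (hiff α β hbα hbβ).mp heqg⟩

end
end

section
/- Let a1, a2 ≥ 2 be integers and N := a1*a2 − 1. Suppose α1, α2, β1, β2 are integers with 0 ≤ α1, α2 ≤ a2 − 1 and 0 ≤ β1, β2 ≤ a1 − 1, and suppose N divides (α2 − α1) − a2·(β2 − β1). Then either (α1, β1) = (α2, β2), or (α1, β1, α2, β2) = (0, a1 − 1, a2 − 1, 0), or (α1, β1, α2, β2) = (a2 − 1, 0, 0, a1 − 1). -/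
/-- The key integer congruence for uniqueness of the representation
`g = J g1^α g2^β` in `G_W`: if `N = a1*a2 - 1` divides
`(α2 - α1) - a2*(β2 - β1)` with `0 ≤ α1, α2 ≤ a2-1` and `0 ≤ β1, β2 ≤ a1-1`,
then the two pairs agree or they are the two exceptional pairs. -/
theorem loop_representation_congruence (a1 a2 : ℤ) (ha1 : 2 ≤ a1) (ha2 : 2 ≤ a2)
    (N : ℤ) (hN : N = a1 * a2 - 1)
    (α1 α2 β1 β2 : ℤ)
    (hα1 : 0 ≤ α1) (hα1' : α1 ≤ a2 - 1) (hα2 : 0 ≤ α2) (hα2' : α2 ≤ a2 - 1)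
    (hβ1 : 0 ≤ β1) (hβ1' : β1 ≤ a1 - 1) (hβ2 : 0 ≤ β2) (hβ2' : β2 ≤ a1 - 1)
    (hdvd : N ∣ (α2 - α1) - a2 * (β2 - β1)) :
    (α1 = α2 ∧ β1 = β2) ∨
    (α1 = 0 ∧ β1 = a1 - 1 ∧ α2 = a2 - 1 ∧ β2 = 0) ∨
    (α1 = a2 - 1 ∧ β1 = 0 ∧ α2 = 0 ∧ β2 = a1 - 1) := by
  obtain ⟨k, hk⟩ := hdvd
  subst hN
  have hNpos : 0 < a1 * a2 - 1 := by nlinarith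
  -- bound the difference
  have hub : (α2 - α1) - a2 * (β2 - β1) ≤ a1 * a2 - 1 := by nlinarith
  have hlb : -(a1 * a2 - 1) ≤ (α2 - α1) - a2 * (β2 - β1) := by nlinarith
  have hk1 : k ≤ 1 := by nlinarith
  have hk2 : -1 ≤ k := by nlinarith
  interval_cases k
  · -- k = -1
    right; right
    have hβ : β2 - β1 = a1 - 1 := by nlinarith
    have hα : α2 - α1 = -(a2 - 1) := by nlinarith
    omega
  · -- k = 0
    left
    have hβ : β2 = β1 := by nlinarith
    constructor
    · nlinarith
    · omega
  · -- k = 1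
    right; left
    have hβ : β2 - β1 = -(a1 - 1) := by nlinarith
    have hα : α2 - α1 = a2 - 1 := by nlinarith
    omega
end

section
/- Let a1, a2 ≥ 2 be integers, N := a1*a2 − 1, q1 := (a2−1)/N, and q2 := (a1−1)/N. Let α, β be integers with 0 ≤ α ≤ a2 − 1 and 0 ≤ β ≤ a1 − 1, with (α, β) ≠ (a2 − 1, 0) and (α, β) ≠ (0, a1 − 1). Then the rational numbers t1 := ((a2 − 1) − α + a2·β)/N and t2 := ((a1 − 1) + a1·α − β)/N satisfy 0 ≤ t1 < 1 and 0 ≤ t2 < 1, and moreover 2(t1 − q1) + 2(t2 − q2) = 2·(α·(a1 − 1) + β·(a2 − 1))/N. -/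
/-- The phases `Θ1^g = t1`, `Θ2^g = t2` of `g = J g1^α g2^β` lie in `[0,1)`,
and the `W`-degree `2(t1 - q1) + 2(t2 - q2)` of `e_g` equals
`2(α(a1-1) + β(a2-1))/N`, i.e. `2(α q̄1 + β q̄2)`. -/
theorem loop_W_degree (a1 a2 : ℤ) (ha1 : 2 ≤ a1) (ha2 : 2 ≤ a2)
    (N : ℚ) (hN : N = a1 * a2 - 1)
    (q1 q2 : ℚ) (hq1 : q1 = (a2 - 1) / N) (hq2 : q2 = (a1 - 1) / N)
    (α β : ℤ) (hα : 0 ≤ α) (hα' : α ≤ a2 - 1) (hβ : 0 ≤ β) (hβ' : β ≤ a1 - 1)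
    (hne1 : ¬(α = a2 - 1 ∧ β = 0)) (hne2 : ¬(α = 0 ∧ β = a1 - 1))
    (t1 t2 : ℚ) (ht1 : t1 = ((a2 - 1 : ℚ) - α + a2 * β) / N)
    (ht2 : t2 = ((a1 - 1 : ℚ) + a1 * α - β) / N) :
    (0 ≤ t1 ∧ t1 < 1) ∧ (0 ≤ t2 ∧ t2 < 1) ∧
    2 * (t1 - q1) + 2 * (t2 - q2) = 2 * (α * (a1 - 1) + β * (a2 - 1)) / N := by
  have hNZ : (3 : ℤ) ≤ a1 * a2 - 1 := by nlinarith
  have hNpos : (0 : ℚ) < N := by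
    by_contra h; push_neg at h; rw [hN] at h; have : ((3:ℤ):ℚ) ≤ ((a1*a2-1:ℤ):ℚ) := by exact_mod_cast hNZ
    push_cast at this
    linarith
  have hNne : N ≠ 0 := ne_of_gt hNpos
  -- integer bounds for numerator of t1
  have h1l : (0 : ℤ) ≤ (a2 - 1) - α + a2 * β := by nlinarith
  have h1u : (a2 - 1) - α + a2 * β < a1 * a2 - 1 := by
    rcases eq_or_lt_of_le hβ' with hb | hb
    · have hα1 : 1 ≤ α := by
        rcases eq_or_lt_of_le hα with ha | ha
        · exact absurd ⟨ha.symm, hb⟩ hne2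
        · omega
      nlinarith
    · nlinarith
  -- integer bounds for numerator of t2
  have h2l : (0 : ℤ) ≤ (a1 - 1) + a1 * α - β := by nlinarith
  have h2u : (a1 - 1) + a1 * α - β < a1 * a2 - 1 := by
    rcases eq_or_lt_of_le hα' with ha | ha
    · have hβ1 : 1 ≤ β := by
        rcases eq_or_lt_of_le hβ with hb | hb
        · exact absurd ⟨ha, hb.symm⟩ hne1
        · omega
      nlinarith
    · nlinarith
  have hq1' : (0:ℚ) ≤ (a2 - 1 : ℚ) - α + a2 * β := by exact_mod_cast h1l
  have hq1u : (a2 - 1 : ℚ) - α + a2 * β < N := by rw [hN]; exact_mod_cast h1u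
  have hq2' : (0:ℚ) ≤ (a1 - 1 : ℚ) + a1 * α - β := by exact_mod_cast h2l
  have hq2u : (a1 - 1 : ℚ) + a1 * α - β < N := by rw [hN]; exact_mod_cast h2u
  refine ⟨⟨?_, ?_⟩, ⟨?_, ?_⟩, ?_⟩
  · rw [ht1]; positivity
  · rw [ht1]; exact (div_lt_one hNpos).mpr hq1u
  · rw [ht2]; positivity
  · rw [ht2]; exact (div_lt_one hNpos).mpr hq2u
  · rw [ht1, ht2, hq1, hq2]
    field_simp
    ring
end
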